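/- In the biased majority model on the torus T_{n,n} with von Neumann neighborhood and random initial coloring with p_b = o(1/√(log n)), with probability 1 - o(1) there is no Moore-connected blue component of size ⌈log n⌉ in generation g_1. -/

import Mathlib

/-! A cell is blue in `g₁` only if at least two of its four von Neumann neighbours are blue in
`g₀`. So a Moore-connected set `S` of cells blue in `g₁` produces a set `B` of cells blue in `g₀`
with `|S| ≤ 2|B|` (each cell neighbours at most four others), and `B` is connected for the
adjacency "Chebyshev distance at most 3", whose 49 difference vectors form `torusBall n 3`.
Trimming `B` to size `m = ⌈k/2⌉` and encoding a connected `m`-set by a start cell and the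
`2(m - 1)` steps of a walk around a spanning tree gives the union bound
`n² · 49^(2(m-1)) · p^m ≤ n² (2401 p)^m`, which is at most `1/n` once `2401 p ≤ e⁻⁶`,
because `m ≥ (log n)/2`. -/

open Filter

/-- Number of blue cells among the four von Neumann neighbors of `v` in the torus. -/
def vnCount (n : ℕ) (g : ZMod n × ZMod n → Bool) (v : ZMod n × ZMod n) : ℕ :=
  (if g (v.1 + 1, v.2) = true then 1 else 0) + (if g (v.1 - 1, v.2) = true then 1 else 0) +
    (if g (v.1, v.2 + 1) = true then 1 else 0) + (if g (v.1, v.2 - 1) = true then 1 else 0)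

/-- One synchronous step of the majority model on the torus `T_{n,n}` with von Neumann
neighborhood: strict majority among the 4 neighbors, ties conserve the current color. -/
def torusMajStep (n : ℕ) (g : ZMod n × ZMod n → Bool) : ZMod n × ZMod n → Bool :=
  fun v => if 2 < vnCount n g v then true else if vnCount n g v < 2 then false else g v

/-- One synchronous step of the biased majority model on the torus `T_{n,n}` with
von Neumann neighborhood: a cell becomes blue iff at least 2 of its 4 neighbors are blue. -/
def torusBMajStep (n : ℕ) (g : ZMod n × ZMod n → Bool) : ZMod n × ZMod n → Bool :=
  fun v => decide (2 ≤ vnCount n g v)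

/-- Moore (8-)adjacency on the torus `T_{n,n}`. -/
def mooreAdj (n : ℕ) (u v : ZMod n × ZMod n) : Prop :=
  u ≠ v ∧ (u.1 = v.1 ∨ u.1 = v.1 + 1 ∨ v.1 = u.1 + 1) ∧
    (u.2 = v.2 ∨ u.2 = v.2 + 1 ∨ v.2 = u.2 + 1)

/-- The Moore (8-)adjacency graph on the torus `T_{n,n}`. -/
def mooreGraph (n : ℕ) : SimpleGraph (ZMod n × ZMod n) where
  Adj := mooreAdj n
  symm := ⟨by
    rintro u v ⟨h0, h1, h2⟩
    exact ⟨Ne.symm h0, by tauto, by tauto⟩⟩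
  loopless := ⟨fun v h => h.1 rfl⟩

open scoped Classical in
/-- Probability, under the product measure where each vertex is blue (`true`)
independently with probability `p`, of the event `E`. -/
noncomputable def pr {α : Type*} [Fintype α] [DecidableEq α] (p : ℝ)
    (E : (α → Bool) → Prop) : ℝ :=
  ∑ g : α → Bool, if E g then (∏ v, if g v = true then p else 1 - p) else 0

open Finset

section ProductMeasure
variable {α : Type*} [Fintype α] {p : ℝ}

lemma ite_prod_weight_nonneg (h0 : 0 ≤ p) (h1 : p ≤ 1) (P : Prop) [Decidable P] (g : α → Bool) :
    0 ≤ if P then ∏ v, (if g v = true then p else 1 - p) else 0 := by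
  split
  · exact prod_nonneg fun v _ => by split <;> linarith
  · rfl

variable [DecidableEq α]

open scoped Classical

lemma pr_nonneg (h0 : 0 ≤ p) (h1 : p ≤ 1) (E : (α → Bool) → Prop) : 0 ≤ pr p E :=
  sum_nonneg fun g _ => ite_prod_weight_nonneg h0 h1 _ g

lemma pr_mono (h0 : 0 ≤ p) (h1 : p ≤ 1) {E F : (α → Bool) → Prop} (h : ∀ g, E g → F g) :
    pr p E ≤ pr p F :=
  sum_le_sum fun g _ => by
    by_cases hE : E g
    · simp [hE, h g hE]
    · simpa [hE] using ite_prod_weight_nonneg h0 h1 (F g) g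

lemma pr_not (E : (α → Bool) → Prop) : pr p (fun g => ¬ E g) = 1 - pr p E := by
  have htotal : ∑ g : α → Bool, (∏ v, if g v = true then p else 1 - p) = 1 := by
    rw [← Fintype.prod_sum fun (_ : α) (b : Bool) => if b = true then p else 1 - p]
    simp
  rw [eq_sub_iff_add_eq, ← htotal, pr, pr, ← sum_add_distrib]
  exact sum_congr rfl fun g _ => by by_cases hE : E g <;> simp [hE]

lemma pr_exists_le_sum (h0 : 0 ≤ p) (h1 : p ≤ 1) {ι : Type*} (T : Finset ι)
    (Q : ι → (α → Bool) → Prop) :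
    pr p (fun g => ∃ i ∈ T, Q i g) ≤ ∑ i ∈ T, pr p (Q i) := by
  simp only [pr]
  rw [sum_comm]
  refine sum_le_sum fun g _ => ?_
  split
  · rename_i hg
    obtain ⟨i, hi, hQ⟩ := hg
    exact (if_pos hQ).symm.le.trans
      (single_le_sum (fun j _ => ite_prod_weight_nonneg h0 h1 (Q j g) g) hi)
  · exact sum_nonneg fun i _ => ite_prod_weight_nonneg h0 h1 _ g

lemma pr_forall_mem_le (h0 : 0 ≤ p) (h1 : p ≤ 1) (B : Finset α) :
    pr p (fun g => ∀ v ∈ B, g v = true) ≤ p ^ #B := by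
  let f : α → Bool → ℝ := fun v b => if b = true then p else if v ∈ B then 0 else 1 - p
  have hsum : ∑ g : α → Bool, ∏ v, f v (g v) = p ^ #B := by
    have hf : ∀ v, ∑ b, f v b = if v ∈ B then p else 1 := fun v => by
      by_cases hv : v ∈ B <;> simp [f, hv]
    rw [← Fintype.prod_sum f, prod_congr rfl fun v _ => hf v, prod_ite_mem, univ_inter,
      prod_const]
  rw [← hsum]
  refine sum_le_sum fun g _ => ?_
  split
  · rename_i hg
    exact (prod_congr rfl fun v _ => by by_cases hv : v ∈ B <;> simp [f, hv, hg v]).le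
  · exact prod_nonneg fun v _ => by simp only [f]; split_ifs <;> linarith

lemma pr_exists_forall_mem_le (h0 : 0 ≤ p) (h1 : p ≤ 1) (𝓑 : Finset (Finset α)) {m : ℕ}
    (h𝓑 : ∀ B ∈ 𝓑, #B = m) :
    pr p (fun g => ∃ B ∈ 𝓑, ∀ v ∈ B, g v = true) ≤ #𝓑 * p ^ m :=
  calc _ ≤ ∑ B ∈ 𝓑, pr p (fun g => ∀ v ∈ B, g v = true) := pr_exists_le_sum h0 h1 𝓑 _
    _ ≤ ∑ _B ∈ 𝓑, p ^ m := sum_le_sum fun B hB => h𝓑 B hB ▸ pr_forall_mem_le h0 h1 B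
    _ = #𝓑 * p ^ m := by rw [sum_const, nsmul_eq_mul]

end ProductMeasure

namespace SimpleGraph

variable {V : Type*} [DecidableEq V] {G : SimpleGraph V}

lemma exists_connected_induce_erase {B : Finset V} (hB : (G.induce (B : Set V)).Connected)
    (hcard : 1 < #B) :
    ∃ u ∈ B, (G.induce (B.erase u : Set V)).Connected ∧ ∃ w ∈ B.erase u, G.Adj w u := by
  have : Nontrivial (B : Set V) := (one_lt_card_iff_nontrivial.mp hcard).coe_sort
  obtain ⟨u, hu⟩ := hB.exists_connected_induce_compl_singleton_of_finite_nontrivial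
  obtain ⟨w, hw⟩ := hB.preconnected.exists_adj_of_nontrivial u
  let f : (G.induce (B : Set V)).induce {u}ᶜ →g G.induce (B.erase u : Set V) :=
    { toFun := fun x => ⟨x.1.1, mem_erase.2 ⟨fun h => x.2 (Subtype.ext h), x.1.2⟩⟩
      map_rel' := id }
  refine ⟨u, u.2, hu.map f fun y => ?_, w,
    mem_erase.2 ⟨fun h => hw.ne (Subtype.ext h).symm, w.2⟩, hw.symm⟩
  obtain ⟨hyu, hyB⟩ := mem_erase.1 y.2
  exact ⟨⟨⟨y, hyB⟩, fun h => hyu (congrArg Subtype.val h)⟩, rfl⟩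

lemma exists_connected_induce_subset_card {B : Finset V} (hB : (G.induce (B : Set V)).Connected)
    {m : ℕ} (hm : 1 ≤ m) (hmB : m ≤ #B) :
    ∃ B' ⊆ B, #B' = m ∧ (G.induce (B' : Set V)).Connected := by
  induction B using Finset.strongInduction with
  | H B ih =>
    obtain hmB | hmB := hmB.eq_or_lt
    · exact ⟨B, subset_rfl, hmB.symm, hB⟩
    obtain ⟨u, hu, hBu, -⟩ := exists_connected_induce_erase hB (by omega)
    obtain ⟨B', hB', hcard, hconn⟩ :=
      ih _ (erase_ssubset hu) hBu (by rw [card_erase_of_mem hu]; omega)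
    exact ⟨B', hB'.trans (erase_subset u B), hcard, hconn⟩

lemma exists_walk_support_toFinset_eq {B : Finset V} (hB : (G.induce (B : Set V)).Connected) :
    ∃ (u v : V) (p : G.Walk u v), p.support.toFinset = B ∧ p.length = 2 * (#B - 1) := by
  induction B using Finset.strongInduction with
  | H B ih =>
    obtain hcard | hcard := le_or_gt #B 1
    · obtain ⟨b, rfl⟩ : ∃ b, B = {b} := by
        obtain ⟨⟨b, hb⟩⟩ := hB.nonempty
        exact ⟨b, eq_singleton_iff_unique_mem.2 ⟨hb, fun x hx => card_le_one.1 hcard _ hx _ hb⟩⟩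
      exact ⟨b, b, .nil, by simp⟩
    obtain ⟨u, hu, hBu, w, hw, hwu⟩ := exists_connected_induce_erase hB hcard
    obtain ⟨a, c, p, hp, hlen⟩ := ih _ (erase_ssubset hu) hBu
    have hwp : w ∈ p.support := by rw [← List.mem_toFinset, hp]; exact hw
    obtain ⟨q, r, rfl⟩ := Walk.mem_support_iff_exists_append.1 hwp
    refine ⟨a, c, q.append (.cons hwu (.cons hwu.symm r)), ?_, ?_⟩
    · rw [← insert_erase hu, ← hp]
      ext x
      simp only [Walk.support_append, Walk.support_cons, List.tail_cons, List.toFinset_append,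
        List.toFinset_cons, Finset.mem_union, Finset.mem_insert, List.mem_toFinset]
      have := r.cons_tail_support
      have := q.end_mem_support
      grind
    · rw [card_erase_of_mem hu] at hlen
      simp only [Walk.length_append, Walk.length_cons] at hlen ⊢
      omega

section AddCommGroup
variable {α : Type*} [AddCommGroup α] {G : SimpleGraph α}

lemma Walk.support_eq_scanl {u v : α} (p : G.Walk u v) :
    p.support = List.scanl (· + ·) u (p.darts.map fun d => d.snd - d.fst) := by
  induction p with
  | nil => simp
  | cons h p ih => simp [ih]

open scoped Classical in
lemma card_connected_finsets_le [Fintype α] (D : Finset α)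
    (hD : ∀ x y, G.Adj x y → y - x ∈ D) (m : ℕ) :
    #{B : Finset α | #B = m ∧ (G.induce (B : Set α)).Connected} ≤
      Fintype.card α * #D ^ (2 * (m - 1)) := by
  set L := 2 * (m - 1)
  let enc : α × (Fin L → α) → Finset α := fun x => (List.scanl (· + ·) x.1 (List.ofFn x.2)).toFinset
  calc _ ≤ #((univ ×ˢ Fintype.piFinset fun _ : Fin L => D).image enc) := card_le_card ?_
    _ ≤ #(univ ×ˢ Fintype.piFinset fun _ : Fin L => D) := card_image_le
    _ = _ := by simp
  intro B hB
  obtain ⟨hcard, hconn⟩ := (mem_filter.1 hB).2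
  obtain ⟨u, v, p, hp, hlen⟩ := exists_walk_support_toFinset_eq hconn
  set steps := p.darts.map fun d => d.snd - d.fst
  have hsteps : steps.length = L := by simp [steps, hlen, hcard, L]
  refine mem_image.2 ⟨(u, fun i => steps[i.cast hsteps.symm]), ?_, ?_⟩
  · have hstepsD : ∀ x ∈ steps, x ∈ D := by
      simp only [steps, List.mem_map]
      rintro _ ⟨d, -, rfl⟩
      exact hD _ _ d.adj
    simpa using fun i => hstepsD _ (List.getElem_mem _)
  · have hofFn : List.ofFn (fun i : Fin L => steps[i.cast hsteps.symm]) = steps :=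
      List.ext_getElem (by simp [hsteps]) fun _ _ _ => by simp
    simp only [enc, hofFn, ← hp, p.support_eq_scanl, steps]

end AddCommGroup

end SimpleGraph

section Torus
variable {n : ℕ}

noncomputable def torusBall (n t : ℕ) : Finset (ZMod n × ZMod n) :=
  (Icc (-(t : ℤ)) t ×ˢ Icc (-(t : ℤ)) t).image fun z => ((z.1 : ZMod n), (z.2 : ZMod n))

lemma mem_torusBall {t : ℕ} {x : ZMod n × ZMod n} :
    x ∈ torusBall n t ↔ ∃ a b : ℤ, |a| ≤ t ∧ |b| ≤ t ∧ ((a : ZMod n), (b : ZMod n)) = x := by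
  simp only [torusBall, mem_image, mem_product, mem_Icc, Prod.exists, abs_le]
  aesop

lemma zero_mem_torusBall (t : ℕ) : (0 : ZMod n × ZMod n) ∈ torusBall n t :=
  mem_torusBall.2 ⟨0, 0, by simp, by simp, by simp⟩

lemma add_mem_torusBall {s t : ℕ} {x y : ZMod n × ZMod n} (hx : x ∈ torusBall n s)
    (hy : y ∈ torusBall n t) : x + y ∈ torusBall n (s + t) := by
  obtain ⟨a, b, ha, hb, rfl⟩ := mem_torusBall.1 hx
  obtain ⟨c, d, hc, hd, rfl⟩ := mem_torusBall.1 hy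
  refine mem_torusBall.2 ⟨a + c, b + d, ?_, ?_, by simp⟩ <;> push_cast <;>
    refine (abs_add_le _ _).trans ?_ <;> linarith

lemma neg_mem_torusBall {t : ℕ} {x : ZMod n × ZMod n} (hx : x ∈ torusBall n t) :
    -x ∈ torusBall n t := by
  obtain ⟨a, b, ha, hb, rfl⟩ := mem_torusBall.1 hx
  exact mem_torusBall.2 ⟨-a, -b, by simpa, by simpa, by simp⟩

lemma card_torusBall_le (t : ℕ) : #(torusBall n t) ≤ (2 * t + 1) ^ 2 :=
  card_image_le.trans_eq <| by
    rw [card_product, Int.card_Icc, sq]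
    congr 1 <;> omega

def torusNearGraph (n t : ℕ) : SimpleGraph (ZMod n × ZMod n) :=
  SimpleGraph.fromRel fun x y => y - x ∈ torusBall n t

lemma sub_mem_torusBall_of_adj {t : ℕ} {x y : ZMod n × ZMod n}
    (h : (torusNearGraph n t).Adj x y) : y - x ∈ torusBall n t := by
  obtain ⟨-, h | h⟩ := (SimpleGraph.fromRel_adj _ _ _).1 h
  · exact h
  · simpa using neg_mem_torusBall h

lemma sub_mem_torusBall_one_of_mooreAdj {u v : ZMod n × ZMod n} (h : mooreAdj n u v) :
    v - u ∈ torusBall n 1 := by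
  have hcoord : ∀ x y : ZMod n, (x = y ∨ x = y + 1 ∨ y = x + 1) →
      ∃ a : ℤ, |a| ≤ 1 ∧ (a : ZMod n) = y - x := by
    rintro x y (rfl | rfl | rfl)
    · exact ⟨0, by simp, by simp⟩
    · exact ⟨-1, by simp, by push_cast; ring⟩
    · exact ⟨1, by simp, by push_cast; ring⟩
  obtain ⟨-, h1, h2⟩ := h
  obtain ⟨a, ha, ha'⟩ := hcoord _ _ h1
  obtain ⟨b, hb, hb'⟩ := hcoord _ _ h2
  exact mem_torusBall.2 ⟨a, b, by exact_mod_cast ha, by exact_mod_cast hb, by rw [ha', hb']; rfl⟩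

def vnDir (n : ℕ) : Fin 4 → ZMod n × ZMod n := ![(1, 0), (-1, 0), (0, 1), (0, -1)]

lemma vnDir_mem_torusBall (i : Fin 4) : vnDir n i ∈ torusBall n 1 := by
  rw [mem_torusBall]
  fin_cases i
  · exact ⟨1, 0, by simp, by simp, by simp [vnDir]⟩
  · exact ⟨-1, 0, by simp, by simp, by simp [vnDir]⟩
  · exact ⟨0, 1, by simp, by simp, by simp [vnDir]⟩
  · exact ⟨0, -1, by simp, by simp, by simp [vnDir]⟩

lemma vnCount_eq_card (g : ZMod n × ZMod n → Bool) (v : ZMod n × ZMod n) :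
    vnCount n g v = #{i | g (v + vnDir n i) = true} := by
  rw [card_filter, Fin.sum_univ_four]
  simp [vnCount, vnDir, sub_eq_add_neg, Prod.add_def]

lemma reachable_induce_torusNearGraph {t : ℕ} {B : Set (ZMod n × ZMod n)} {x y : ZMod n × ZMod n}
    (hx : x ∈ B) (hy : y ∈ B) (h : y - x ∈ torusBall n t) :
    ((torusNearGraph n t).induce B).Reachable ⟨x, hx⟩ ⟨y, hy⟩ := by
  by_cases hxy : x = y
  · subst hxy; rfl
  · have hadj : (torusNearGraph n t).Adj x y := (SimpleGraph.fromRel_adj _ x y).2 ⟨hxy, .inl h⟩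
    exact SimpleGraph.Adj.reachable (G := (torusNearGraph n t).induce B) hadj

lemma add_vnDir_sub_add_vnDir_mem {v w : ZMod n × ZMod n} (h : w - v ∈ torusBall n 1)
    (i j : Fin 4) :
    (w + vnDir n j) - (v + vnDir n i) ∈ torusBall n 3 := by
  have := add_mem_torusBall (add_mem_torusBall h (vnDir_mem_torusBall j))
    (neg_mem_torusBall (vnDir_mem_torusBall i))
  convert this using 1
  abel

end Torus

section BlueNeighbors
variable {n : ℕ} (g : ZMod n × ZMod n → Bool)

def blueVnNeighbors (S : Finset (ZMod n × ZMod n)) : Finset (ZMod n × ZMod n) :=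
  {q ∈ S ×ˢ (univ : Finset (Fin 4)) | g (q.1 + vnDir n q.2) = true}.image
    fun q => q.1 + vnDir n q.2

variable {g}

lemma mem_blueVnNeighbors {S : Finset (ZMod n × ZMod n)} {b : ZMod n × ZMod n} :
    b ∈ blueVnNeighbors g S ↔ ∃ v ∈ S, ∃ i, v + vnDir n i = b ∧ g b = true := by
  simp only [blueVnNeighbors, mem_image, mem_filter, mem_product, mem_univ, and_true,
    Prod.exists]
  aesop

lemma card_le_two_mul_card_blueVnNeighbors {S : Finset (ZMod n × ZMod n)}
    (hS : ∀ v ∈ S, 2 ≤ vnCount n g v) : #S ≤ 2 * #(blueVnNeighbors g S) := by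
  set P := {q ∈ S ×ˢ (univ : Finset (Fin 4)) | g (q.1 + vnDir n q.2) = true}
  have hP : 2 * #S ≤ #P :=
    calc 2 * #S = ∑ _v ∈ S, 2 := by rw [sum_const, smul_eq_mul, mul_comm]
      _ ≤ ∑ v ∈ S, vnCount n g v := sum_le_sum hS
      _ = #P := by
        simp only [P, vnCount_eq_card, card_filter, sum_product]
  -- a blue cell is the `i`-th neighbour of at most one cell for each of the four directions `i`
  have hfiber : #P ≤ 4 * #(blueVnNeighbors g S) := by
    refine card_le_mul_card_image P 4 fun b _ => ?_
    refine (card_le_card_of_injOn Prod.snd (t := univ) (fun _ _ => mem_coe.2 (mem_univ _))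
      fun q hq r hr hqr => ?_).trans_eq (by simp)
    have hq' := (mem_filter.1 (mem_coe.1 hq)).2
    have hr' := (mem_filter.1 (mem_coe.1 hr)).2
    refine Prod.ext ?_ hqr
    have := hq'.trans hr'.symm
    rw [hqr] at this
    exact add_right_cancel this
  omega

lemma connected_blueVnNeighbors {S : Finset (ZMod n × ZMod n)} (hS : ∀ v ∈ S, 2 ≤ vnCount n g v)
    (hconn : ((mooreGraph n).induce (S : Set (ZMod n × ZMod n))).Connected) :
    ((torusNearGraph n 3).induce (blueVnNeighbors g S : Set (ZMod n × ZMod n))).Connected := by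
  have hblue : ∀ v ∈ S, ∃ i, g (v + vnDir n i) = true := fun v hv => by
    have hpos : 0 < #{i | g (v + vnDir n i) = true} := by
      have := hS v hv
      rw [vnCount_eq_card] at this
      omega
    obtain ⟨i, hi⟩ := card_pos.1 hpos
    exact ⟨i, (mem_filter.1 hi).2⟩
  have hmem : ∀ v ∈ S, ∀ i, g (v + vnDir n i) = true → v + vnDir n i ∈ blueVnNeighbors g S :=
    fun v hv i hi => mem_blueVnNeighbors.2 ⟨v, hv, i, rfl, hi⟩
  have hwalk : ∀ {v w} (p : ((mooreGraph n).induce (S : Set (ZMod n × ZMod n))).Walk v w)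
      (i j : Fin 4) (hi : g (v + vnDir n i) = true) (hj : g (w + vnDir n j) = true),
      ((torusNearGraph n 3).induce (blueVnNeighbors g S : Set (ZMod n × ZMod n))).Reachable
        ⟨_, hmem v v.2 i hi⟩ ⟨_, hmem w w.2 j hj⟩ := by
    intro v w p
    induction p with
    | nil =>
      intro i j hi hj
      exact reachable_induce_torusNearGraph _ _
        (add_vnDir_sub_add_vnDir_mem (by simpa using zero_mem_torusBall 1) i j)
    | @cons u v w huv p ih =>
      intro i j hi hj
      obtain ⟨k, hk⟩ := hblue v v.2
      exact (reachable_induce_torusNearGraph _ _ (add_vnDir_sub_add_vnDir_mem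
        (sub_mem_torusBall_one_of_mooreAdj huv) i k)).trans (ih k j hk hj)
  obtain ⟨v₀⟩ := hconn.nonempty
  obtain ⟨i₀, hi₀⟩ := hblue v₀ v₀.2
  refine (SimpleGraph.connected_iff_exists_forall_reachable _).2 ⟨⟨_, hmem v₀ v₀.2 i₀ hi₀⟩, ?_⟩
  rintro ⟨b, hb⟩
  obtain ⟨w, hw, j, rfl, hj⟩ := mem_blueVnNeighbors.1 hb
  exact hwalk (hconn.preconnected v₀ ⟨w, hw⟩).some i₀ j hi₀ hj

end BlueNeighbors

def HasBlueMooreCluster (n k : ℕ) (g : ZMod n × ZMod n → Bool) : Prop :=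
  ∃ S : Finset (ZMod n × ZMod n), #S = k ∧ (∀ v ∈ S, torusBMajStep n g v = true) ∧
    ((mooreGraph n).induce (S : Set (ZMod n × ZMod n))).Connected

lemma HasBlueMooreCluster.exists_blue_connected {n k : ℕ} {g : ZMod n × ZMod n → Bool}
    (h : HasBlueMooreCluster n k g) :
    ∃ B : Finset (ZMod n × ZMod n), #B = (k + 1) / 2 ∧
      ((torusNearGraph n 3).induce (B : Set (ZMod n × ZMod n))).Connected ∧
      ∀ v ∈ B, g v = true := by
  obtain ⟨S, rfl, hS, hconn⟩ := h
  have hS2 : ∀ v ∈ S, 2 ≤ vnCount n g v := fun v hv => by simpa [torusBMajStep] using hS v hv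
  have hSpos : 0 < #S := card_pos.2 <| let ⟨v⟩ := hconn.nonempty; ⟨v, v.2⟩
  have hcard := card_le_two_mul_card_blueVnNeighbors hS2
  obtain ⟨B, hBsub, hB, hBconn⟩ := SimpleGraph.exists_connected_induce_subset_card
    (connected_blueVnNeighbors hS2 hconn) (m := (#S + 1) / 2) (by omega) (by omega)
  refine ⟨B, hB, hBconn, fun b hb => ?_⟩
  obtain ⟨-, -, -, -, hblue⟩ := mem_blueVnNeighbors.1 (hBsub hb)
  exact hblue

lemma pr_hasBlueMooreCluster_le (N k : ℕ) [NeZero N] {p : ℝ} (h0 : 0 ≤ p) (h1 : p ≤ 1) :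
    pr p (HasBlueMooreCluster N k) ≤ N ^ 2 * (2401 * p) ^ ((k + 1) / 2) := by
  classical
  set m := (k + 1) / 2
  set 𝓑 : Finset (Finset (ZMod N × ZMod N)) :=
    {B | #B = m ∧ ((torusNearGraph N 3).induce (B : Set (ZMod N × ZMod N))).Connected}
  have hcount : (#𝓑 : ℝ) ≤ N ^ 2 * 2401 ^ m := by
    have h𝓑 := SimpleGraph.card_connected_finsets_le (torusBall N 3)
      (fun _ _ => sub_mem_torusBall_of_adj) m
    have hball : #(torusBall N 3) ^ (2 * (m - 1)) ≤ 2401 ^ m :=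
      calc #(torusBall N 3) ^ (2 * (m - 1)) ≤ 49 ^ (2 * (m - 1)) :=
            Nat.pow_le_pow_left (card_torusBall_le 3) _
        _ = 2401 ^ (m - 1) := by rw [pow_mul]; norm_num
        _ ≤ 2401 ^ m := Nat.pow_le_pow_right (by norm_num) (by omega)
    rw [Fintype.card_prod, ZMod.card, ← sq] at h𝓑
    exact_mod_cast h𝓑.trans (Nat.mul_le_mul_left _ hball)
  calc pr p (HasBlueMooreCluster N k) ≤ pr p (fun g => ∃ B ∈ 𝓑, ∀ v ∈ B, g v = true) :=
        pr_mono h0 h1 fun g hg =>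
          let ⟨B, hB, hconn, hblue⟩ := hg.exists_blue_connected
          ⟨B, by simp [𝓑, m, hB, hconn], hblue⟩
    _ ≤ #𝓑 * p ^ m := pr_exists_forall_mem_le h0 h1 𝓑 fun B hB => (mem_filter.1 hB).2.1
    _ ≤ N ^ 2 * 2401 ^ m * p ^ m := by gcongr
    _ = N ^ 2 * (2401 * p) ^ m := by ring

lemma sq_mul_pow_le_one_div {N x : ℝ} {m : ℕ} (hN : 0 < N) (hx0 : 0 ≤ x) (hx : x ≤ Real.exp (-6))
    (hm : Real.log N ≤ 2 * m) : N ^ 2 * x ^ m ≤ 1 / N := by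
  have hN3 : N ^ 3 ≤ Real.exp 6 ^ m :=
    calc N ^ 3 ≤ Real.exp (2 * m) ^ 3 := by gcongr; exact (Real.log_le_iff_le_exp hN).1 hm
      _ = Real.exp 6 ^ m := by rw [← Real.exp_nat_mul, ← Real.exp_nat_mul]; ring_nf
  have hx6 : x * Real.exp 6 ≤ 1 :=
    calc x * Real.exp 6 ≤ Real.exp (-6) * Real.exp 6 := by gcongr
      _ = 1 := by rw [← Real.exp_add]; simp
  rw [le_div_iff₀ hN]
  calc N ^ 2 * x ^ m * N = x ^ m * N ^ 3 := by ring
    _ ≤ x ^ m * Real.exp 6 ^ m := by gcongr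
    _ = (x * Real.exp 6) ^ m := by rw [mul_pow]
    _ ≤ 1 := pow_le_one₀ (by positivity) hx6

lemma pr_hasBlueMooreCluster_log_le (n : ℕ) {q : ℝ} (h0 : 0 ≤ q) (h1 : q ≤ 1)
    (hq : 2401 * q ≤ Real.exp (-6)) :
    pr q (HasBlueMooreCluster (n + 1) ⌈Real.log (n + 1)⌉₊) ≤ 1 / ((n : ℝ) + 1) := by
  have hceil : Real.log (n + 1) ≤ 2 * ((⌈Real.log (n + 1)⌉₊ + 1) / 2 : ℕ) :=
    (Nat.le_ceil _).trans (by exact_mod_cast (by omega))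
  refine (pr_hasBlueMooreCluster_le (n + 1) _ h0 h1).trans ?_
  push_cast
  exact sq_mul_pow_le_one_div (by positivity) (by positivity) hq hceil

lemma tendsto_zero_of_mul_sqrt_log {f : ℕ → ℝ} (hf0 : ∀ n, 0 ≤ f n)
    (hf : Tendsto (fun n : ℕ => f n * Real.sqrt (Real.log (n + 1))) atTop (nhds 0)) :
    Tendsto f atTop (nhds 0) := by
  refine squeeze_zero' (.of_forall hf0) ?_ hf
  filter_upwards [eventually_ge_atTop 2] with n hn
  have hlog : 1 ≤ Real.log (n + 1) := by
    rw [Real.le_log_iff_exp_le (by positivity)]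
    have : (2 : ℝ) ≤ n := by exact_mod_cast hn
    linarith [Real.exp_one_lt_d9]
  exact le_mul_of_one_le_right (hf0 n) (Real.one_le_sqrt.2 hlog)

/-- Biased majority model on the torus with von Neumann neighborhood: if
`p_b = o(1/√(log n))`, then w.h.p. generation `g_1` contains no Moore-connected blue
component of size `⌈log n⌉`. -/
theorem stmt17 (p : ℕ → ℝ) (hp0 : ∀ n, 0 ≤ p n) (hp1 : ∀ n, p n ≤ 1)
    (hsmall : Tendsto (fun n : ℕ => p n * Real.sqrt (Real.log (n + 1))) atTop (nhds 0)) :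
    Tendsto (fun n : ℕ =>
        pr (α := ZMod (n + 1) × ZMod (n + 1)) (p n)
          (fun g => ¬ ∃ S : Finset (ZMod (n + 1) × ZMod (n + 1)),
            S.card = ⌈Real.log (n + 1)⌉₊ ∧
            (∀ v ∈ S, torusBMajStep (n + 1) g v = true) ∧
            ((mooreGraph (n + 1)).induce (S : Set (ZMod (n + 1) × ZMod (n + 1)))).Connected))
      atTop (nhds 1) := by
  have hp := tendsto_zero_of_mul_sqrt_log hp0 hsmall
  have hbad : Tendsto (fun n : ℕ => pr (p n) (HasBlueMooreCluster (n + 1) ⌈Real.log (n + 1)⌉₊))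
      atTop (nhds 0) := by
    refine squeeze_zero' (.of_forall fun n => pr_nonneg (hp0 n) (hp1 n) _) ?_
      tendsto_one_div_add_atTop_nhds_zero_nat
    filter_upwards [hp.eventually (Iic_mem_nhds (by positivity : (0 : ℝ) < Real.exp (-6) / 2401))]
      with n hn
    exact pr_hasBlueMooreCluster_log_le n (hp0 n) (hp1 n) (by linarith)
  have hgood := (tendsto_const_nhds (x := (1 : ℝ))).sub hbad
  rw [sub_zero] at hgood
  exact hgood.congr fun n => (pr_not _).symm
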